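/- If W satisfies the minimal constraints and W·ln W, W², and W³ are integrable, then S[W] ≥ 3/2 + ln π + (π²/2) · ∫ W(q,p)³ dq dp − μ, where μ is the purity of W. -/
import Mathlib


open Real MeasureTheory

lemma key_log_ineq (t : ℝ) (ht : 0 < t) (ht1 : t ≤ 1) :
    3 / 2 + t ^ 2 / 2 - 2 * t ≤ -Real.log t := by
  set f : ℝ → ℝ := fun s => -Real.log s - s ^ 2 / 2 + 2 * s with hf
  have hanti : AntitoneOn f (Set.Icc t 1) := by
    apply antitoneOn_of_deriv_nonpos (convex_Icc t 1)
    · apply ContinuousOn.add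
      · apply ContinuousOn.sub
        · apply ContinuousOn.neg
          apply Real.continuousOn_log.mono
          intro x hx
          simp only [Set.mem_Icc] at hx
          simp only [Set.mem_compl_iff, Set.mem_singleton_iff]
          linarith [hx.1]
        · fun_prop
      · fun_prop
    · intro x hx
      rw [interior_Icc, Set.mem_Ioo] at hx
      have hx0 : (0:ℝ) < x := lt_of_lt_of_le ht hx.1.le
      have h1 : DifferentiableAt ℝ (fun s : ℝ => -Real.log s) x :=
        ((Real.differentiableAt_log (ne_of_gt hx0)).neg)
      apply DifferentiableAt.differentiableWithinAt
      exact (h1.sub (by fun_prop)).add (by fun_prop)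
    · intro x hx
      rw [interior_Icc, Set.mem_Ioo] at hx
      have hx0 : (0:ℝ) < x := lt_of_lt_of_le ht hx.1.le
      have hd : HasDerivAt f (-x⁻¹ - x + 2) x := by
        have h1 : HasDerivAt (fun s : ℝ => -Real.log s) (-x⁻¹) x :=
          (Real.hasDerivAt_log (ne_of_gt hx0)).neg
        have h2 : HasDerivAt (fun s : ℝ => s ^ 2 / 2) x x := by
          have := (hasDerivAt_pow 2 x).div_const 2
          simpa using this
        have h3 : HasDerivAt (fun s : ℝ => 2 * s) 2 x := by
          simpa using (hasDerivAt_id x).const_mul (2:ℝ)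
        exact (h1.sub h2).add h3
      have hd' : deriv f x = -x⁻¹ - x + 2 := hd.deriv
      rw [hd']
      have h : x * x - 2 * x + 1 = (x - 1) ^ 2 := by ring
      have h2 : 0 ≤ (x - 1) ^ 2 := sq_nonneg _
      have : -x⁻¹ - x + 2 = -((x - 1) ^ 2 / x) := by
        field_simp
        ring
      rw [this]
      exact neg_nonpos.mpr (by positivity)
  have h1 : f 1 ≤ f t := hanti (Set.left_mem_Icc.mpr ht1) (Set.right_mem_Icc.mpr ht1) ht1
  simp only [hf, Real.log_one] at h1
  nlinarith [h1]

lemma pointwise_ineq (w : ℝ) (hw : 0 ≤ w) (hb : Real.pi * w ≤ 1) :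
    (3 / 2 + Real.log Real.pi) * w + Real.pi ^ 2 / 2 * w ^ 3 - 2 * Real.pi * w ^ 2
      ≤ -(w * Real.log w) := by
  rcases eq_or_lt_of_le hw with h | h
  · simp [← h]
  · have hpi := Real.pi_pos
    have ht : 0 < Real.pi * w := by positivity
    have hk := key_log_ineq (Real.pi * w) ht hb
    rw [Real.log_mul (ne_of_gt hpi) (ne_of_gt h)] at hk
    nlinarith [mul_le_mul_of_nonneg_left hk hw]
  
theorem wigner_entropy_B2 (W : ℝ × ℝ → ℝ) (hmeas : Measurable W)
    (hpos : ∀ z, 0 ≤ W z)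
    (hnorm : ∫ z, W z = 1)
    (hbound : ∀ z, Real.pi * W z ≤ 1)
    (hlog : Integrable (fun z => W z * Real.log (W z)))
    (hsq : Integrable (fun z => (W z) ^ 2))
    (hcube : Integrable (fun z => (W z) ^ 3)) :
    (-∫ z, W z * Real.log (W z))
      ≥ 3 / 2 + Real.log Real.pi + (Real.pi ^ 2 / 2) * (∫ z, (W z) ^ 3)
        - 2 * Real.pi * ∫ z, (W z) ^ 2 := by
  have hW : Integrable W := by
    by_contra h
    rw [integral_undef h] at hnorm
    norm_num at hnorm
  have hg : Integrable (fun z => (3 / 2 + Real.log Real.pi) * W z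
      + Real.pi ^ 2 / 2 * (W z) ^ 3 - 2 * Real.pi * (W z) ^ 2) :=
    ((hW.const_mul _).add (hcube.const_mul _)).sub (hsq.const_mul _)
  have hmono : ∫ z, ((3 / 2 + Real.log Real.pi) * W z
      + Real.pi ^ 2 / 2 * (W z) ^ 3 - 2 * Real.pi * (W z) ^ 2)
      ≤ ∫ z, -(W z * Real.log (W z)) := by
    apply integral_mono hg hlog.neg
    intro z
    exact pointwise_ineq (W z) (hpos z) (hbound z)
  rw [integral_neg] at hmono
  rw [ge_iff_le]
  calc 3 / 2 + Real.log Real.pi + Real.pi ^ 2 / 2 * (∫ z, (W z) ^ 3)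
        - 2 * Real.pi * ∫ z, (W z) ^ 2
      = ∫ z, ((3 / 2 + Real.log Real.pi) * W z
        + Real.pi ^ 2 / 2 * (W z) ^ 3 - 2 * Real.pi * (W z) ^ 2) := by
        have i1 : Integrable (fun z => (3 / 2 + Real.log Real.pi) * W z
            + Real.pi ^ 2 / 2 * (W z) ^ 3) := (hW.const_mul _).add (hcube.const_mul _)
        have i2 : Integrable (fun z : ℝ × ℝ => 2 * Real.pi * (W z) ^ 2) := hsq.const_mul _
        have i3 : Integrable (fun z : ℝ × ℝ => (3 / 2 + Real.log Real.pi) * W z) :=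
          hW.const_mul _
        have i4 : Integrable (fun z : ℝ × ℝ => Real.pi ^ 2 / 2 * (W z) ^ 3) :=
          hcube.const_mul _
        rw [integral_sub i1 i2, integral_add i3 i4,
          integral_const_mul, integral_const_mul, integral_const_mul, hnorm]
        ring
    _ ≤ -∫ z, W z * Real.log (W z) := hmono
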